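/- The characteristic polynomial of M (in Mathlib's convention, charpoly M = det(X·1 − M) ∈ ℤ[X]) equals X^n if and only if the partial order ≤ on Fin n is a total order. -/

import Mathlib

/-!
If the order is total, `M` is strictly lower triangular with respect to it, so its characteristic
polynomial is `X ^ n`. Conversely, if the characteristic polynomial is `X ^ n` then `M` is
nilpotent by Cayley–Hamilton, hence so is `M * M`, and its trace `∑ i j, M i j * M j i` vanishes.
All terms are nonnegative, so `M i j * M j i = 0`, i.e. any two elements are comparable.
-/

open scoped Classical

/-- The matrix associated with a partial order on `Fin n`:
`M i j = 0` if `i ≤ j` and `M i j = 1` otherwise. -/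
noncomputable def assocMatrix {n : ℕ} (po : PartialOrder (Fin n)) :
    Matrix (Fin n) (Fin n) ℤ :=
  Matrix.of fun i j => if po.le i j then 0 else 1

open scoped Matrix
open Polynomial

section FinitePartialOrder

variable {α : Type*} [PartialOrder α] [Finite α]

theorem strictMono_ncard_Iio : StrictMono fun a : α => (Set.Iio a).ncard :=
  fun _ _ hab => Set.ncard_lt_ncard (Set.Iio_ssubset_Iio hab)

theorem injective_ncard_Iio_of_total (h : ∀ a b : α, a ≤ b ∨ b ≤ a) :
    Function.Injective fun a : α => (Set.Iio a).ncard := by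
  intro a b hab
  rcases h a b with hle | hle
  · exact hle.eq_of_not_lt fun hlt => (strictMono_ncard_Iio hlt).ne hab
  · exact (hle.eq_of_not_lt fun hlt => (strictMono_ncard_Iio hlt).ne hab.symm).symm

end FinitePartialOrder

namespace Matrix

variable {ι R : Type*} [Fintype ι] [DecidableEq ι]

theorem isNilpotent_of_charpoly_eq_X_pow [CommRing R] {M : Matrix ι ι R}
    (h : M.charpoly = X ^ Fintype.card ι) : IsNilpotent M :=
  ⟨Fintype.card ι, by simpa [h] using aeval_self_charpoly M⟩

theorem mul_apply_swap_eq_zero_of_isNilpotent_of_nonneg [CommRing R] [PartialOrder R] [IsOrderedRing R]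
    [IsReduced R] {M : Matrix ι ι R} (hM : IsNilpotent M) (hM₀ : ∀ i j, 0 ≤ M i j) (i j : ι) :
    M i j * M j i = 0 := by
  have hterm : ∀ k l, 0 ≤ M k l * M l k := fun k l => mul_nonneg (hM₀ k l) (hM₀ l k)
  have hrow : ∀ k, 0 ≤ ∑ l, M k l * M l k := fun k => Finset.sum_nonneg fun l _ => hterm k l
  have htrace : ∑ k, ∑ l, M k l * M l k = 0 := by
    simpa [trace, mul_apply] using
      (isNilpotent_trace_of_isNilpotent ((Commute.refl M).isNilpotent_mul_left hM)).eq_zero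
  have hrow_i := (Finset.sum_eq_zero_iff_of_nonneg fun k _ => hrow k).1 htrace i (Finset.mem_univ _)
  exact (Finset.sum_eq_zero_iff_of_nonneg fun l _ => hterm i l).1 hrow_i j (Finset.mem_univ _)

theorem charpoly_of_blockTriangular_of_injective [CommRing R] {α : Type*} [LinearOrder α]
    {M : Matrix ι ι R} {b : ι → α} (hM : M.BlockTriangular b) (hb : Function.Injective b) :
    M.charpoly = ∏ i, (X - C (M i i)) := by
  let _ : LinearOrder ι := LinearOrder.lift' b hb
  convert charpoly_of_isUpperTriangular M hM

theorem charpoly_eq_X_pow_of_total [CommRing R] [PartialOrder ι] (h : ∀ i j : ι, i ≤ j ∨ j ≤ i)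
    {M : Matrix ι ι R} (hM : ∀ i j, i ≤ j → M i j = 0) : M.charpoly = X ^ Fintype.card ι := by
  have hupper : Mᵀ.BlockTriangular fun i => (Set.Iio i).ncard := fun i j hlt =>
    hM j i <| (h j i).resolve_right fun hij => hlt.not_ge (strictMono_ncard_Iio.monotone hij)
  rw [← charpoly_transpose,
    charpoly_of_blockTriangular_of_injective hupper (injective_ncard_Iio_of_total h)]
  simp [hM _ _ le_rfl]

end Matrix

section PartialOrderMatrix

variable {n : ℕ} (po : PartialOrder (Fin n))

theorem assocMatrix_nonneg (i j : Fin n) : 0 ≤ assocMatrix po i j := by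
  rw [assocMatrix, Matrix.of_apply]
  split_ifs <;> simp

theorem assocMatrix_eq_zero_iff (i j : Fin n) : assocMatrix po i j = 0 ↔ po.le i j := by
  rw [assocMatrix, Matrix.of_apply]
  split_ifs <;> simp_all

theorem charpoly_assocMatrix_of_total (h : ∀ i j : Fin n, po.le i j ∨ po.le j i) :
    (assocMatrix po).charpoly = X ^ n := by
  let _ : PartialOrder (Fin n) := po
  simpa using Matrix.charpoly_eq_X_pow_of_total h fun i j => (assocMatrix_eq_zero_iff po i j).2

end PartialOrderMatrix

/-- The characteristic polynomial of the associated matrix is `X ^ n` iff the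
order is total. -/
theorem stmt14 {n : ℕ} (po : PartialOrder (Fin n)) :
    (assocMatrix po).charpoly = Polynomial.X ^ n ↔
      ∀ i j : Fin n, po.le i j ∨ po.le j i := by
  refine ⟨fun h i j => ?_, charpoly_assocMatrix_of_total po⟩
  have hnil := Matrix.isNilpotent_of_charpoly_eq_X_pow (by rwa [Fintype.card_fin])
  simpa [assocMatrix_eq_zero_iff] using
    Matrix.mul_apply_swap_eq_zero_of_isNilpotent_of_nonneg hnil (assocMatrix_nonneg po) i j
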